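/- For every m ≥ 2 there exists a maximal configuration C on the m×3 grid with occupancy |C| = 2m + ⌈m/2⌉ (realized by the brick pattern); consequently, combined with the upper bound, 2m + ⌈m/2⌉ ≤ E_{m,3} ≤ 3m - ⌊m/2⌋, where E_{m,3} denotes the maximal occupancy among all maximal configurations on the m×3 grid. -/
import Mathlib


/-- The m×n grid of lots: rows 1..m (row m southernmost), columns 1..n. -/
def Grid (m n : ℕ) : Finset (ℕ × ℕ) := Finset.Icc 1 m ×ˢ Finset.Icc 1 n

/-- A house at `p` is blocked from sunlight if the lots immediately to its
east `(p.1, p.2+1)`, west `(p.1, p.2-1)` and south `(p.1+1, p.2)` are all occupied.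
(For configurations contained in the grid, membership in `C` automatically forces
these lots to lie in the grid; truncated subtraction sends column 1's western
neighbour to column 0, which is outside the grid.) -/
def Blocked (C : Finset (ℕ × ℕ)) (p : ℕ × ℕ) : Prop :=
  (p.1, p.2 + 1) ∈ C ∧ (p.1, p.2 - 1) ∈ C ∧ (p.1 + 1, p.2) ∈ C

/-- A configuration on the m×n grid is permissible if it lies in the grid and
no house in it is blocked from sunlight. -/
def Permissible (m n : ℕ) (C : Finset (ℕ × ℕ)) : Prop :=
  C ⊆ Grid m n ∧ ∀ p ∈ C, ¬ Blocked C p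

/-- A configuration is maximal if it is permissible and no permissible
configuration strictly contains it. -/
def MaximalConfig (m n : ℕ) (C : Finset (ℕ × ℕ)) : Prop :=
  Permissible m n C ∧ ∀ D : Finset (ℕ × ℕ), Permissible m n D → C ⊆ D → D = C

lemma mem_Grid {m n : ℕ} {p : ℕ × ℕ} :
    p ∈ Grid m n ↔ (1 ≤ p.1 ∧ p.1 ≤ m) ∧ (1 ≤ p.2 ∧ p.2 ≤ n) := by
  simp [Grid, Finset.mem_product, Finset.mem_Icc]

lemma Blocked_mono {C D : Finset (ℕ × ℕ)} (h : C ⊆ D) {p : ℕ × ℕ}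
    (hb : Blocked C p) : Blocked D p :=
  ⟨h hb.1, h hb.2.1, h hb.2.2⟩

lemma even_count (m : ℕ) :
    ((Finset.Icc 1 m).filter (fun i => i % 2 = 0)).card = m / 2 := by
  induction m with
  | zero => simp
  | succ k ih =>
    have hins : Finset.Icc 1 (k + 1) = insert (k + 1) (Finset.Icc 1 k) := by
      ext x; simp only [Finset.mem_Icc, Finset.mem_insert]; omega
    rw [hins, Finset.filter_insert]
    by_cases h : (k + 1) % 2 = 0
    · rw [if_pos h, Finset.card_insert_of_notMem]
      · omega
      · simp [Finset.mem_Icc]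
    · rw [if_neg h]; omega

/-- The brick pattern. -/
def Brick (m : ℕ) : Finset (ℕ × ℕ) :=
  (Grid m 3).filter (fun p => p.1 % 2 = 1 ∨ p.2 ≠ 2)

lemma mem_Brick {m : ℕ} {p : ℕ × ℕ} :
    p ∈ Brick m ↔ ((1 ≤ p.1 ∧ p.1 ≤ m) ∧ (1 ≤ p.2 ∧ p.2 ≤ 3)) ∧
      (p.1 % 2 = 1 ∨ p.2 ≠ 2) := by
  simp [Brick, Finset.mem_filter, mem_Grid]

lemma Brick_card (m : ℕ) : (Brick m).card = 2 * m + (m + 1) / 2 := by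
  have hsplit := Finset.card_filter_add_card_filter_not
    (s := Grid m 3) (p := fun p => p.1 % 2 = 1 ∨ p.2 ≠ 2)
  have hgrid : (Grid m 3).card = m * 3 := by
    simp [Grid, Nat.card_Icc]
  have hneg : ((Grid m 3).filter (fun p => ¬(p.1 % 2 = 1 ∨ p.2 ≠ 2))).card = m / 2 := by
    have : (Grid m 3).filter (fun p => ¬(p.1 % 2 = 1 ∨ p.2 ≠ 2)) =
        ((Finset.Icc 1 m).filter (fun i => i % 2 = 0)) ×ˢ ({2} : Finset ℕ) := by
      ext ⟨i, j⟩
      simp only [Finset.mem_filter, mem_Grid, Finset.mem_product, Finset.mem_singleton,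
        Finset.mem_Icc]
      constructor
      · rintro ⟨⟨h1, h2⟩, h3⟩; omega
      · rintro ⟨⟨h1, h2⟩, h3⟩; omega
    rw [this, Finset.card_product, even_count]
    simp
  have hB : (Brick m).card = ((Grid m 3).filter (fun p => p.1 % 2 = 1 ∨ p.2 ≠ 2)).card := rfl
  omega

lemma Brick_permissible (m : ℕ) : Permissible m 3 (Brick m) := by
  constructor
  · exact Finset.filter_subset _ _
  · rintro ⟨i, j⟩ hp ⟨he, hw, hs⟩
    rw [mem_Brick] at hp he hw hs
    simp only at he hw hs hp
    omega

lemma Brick_maximal (m : ℕ) (hm : 2 ≤ m) : MaximalConfig m 3 (Brick m) := by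
  refine ⟨Brick_permissible m, ?_⟩
  intro D hD hCD
  refine Finset.Subset.antisymm ?_ hCD
  intro p hpD
  by_contra hpC
  obtain ⟨i, j⟩ := p
  have hg := mem_Grid.mp (hD.1 hpD)
  simp only at hg
  have hij : i % 2 = 0 ∧ j = 2 := by
    rw [mem_Brick] at hpC
    simp only at hpC
    omega
  obtain ⟨hie, rfl⟩ := hij
  by_cases hlt : i < m
  · -- (i,2) itself is blocked in D
    have h1 : (i, 3) ∈ D := hCD (mem_Brick.mpr (by simp; omega))
    have h2 : (i, 1) ∈ D := hCD (mem_Brick.mpr (by simp; omega))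
    have h3 : (i + 1, 2) ∈ D := hCD (mem_Brick.mpr (by simp; omega))
    exact hD.2 (i, 2) hpD ⟨h1, h2, h3⟩
  · -- i = m, and (m-1, 2) becomes blocked
    have him : i = m := by omega
    have hq : (i - 1, 2) ∈ D := hCD (mem_Brick.mpr (by simp; omega))
    have h1 : (i - 1, 3) ∈ D := hCD (mem_Brick.mpr (by simp; omega))
    have h2 : (i - 1, 1) ∈ D := hCD (mem_Brick.mpr (by simp; omega))
    have h3 : (i - 1 + 1, 2) ∈ D := by
      have : i - 1 + 1 = i := by omega
      rw [this]; exact hpD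
    exact hD.2 (i - 1, 2) hq ⟨h1, h2, h3⟩

lemma upper_bound : ∀ m : ℕ, ∀ C : Finset (ℕ × ℕ),
    Permissible m 3 C → C.card ≤ 3 * m - m / 2 := by
  intro m
  induction m using Nat.strong_induction_on with
  | _ m ih =>
    intro C hC
    match m with
    | 0 =>
      have : C ⊆ Grid 0 3 := hC.1
      simp [Grid] at this
      simp [this]
    | 1 =>
      have h1 : C.card ≤ (Grid 1 3).card := Finset.card_le_card hC.1
      have h2 : (Grid 1 3).card = 3 := by simp [Grid, Nat.card_Icc]
      omega
    | (k + 2) =>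
      set A := C.filter (fun p => p.1 ≤ k) with hA
      set B := C.filter (fun p => ¬ p.1 ≤ k) with hBdef
      have hsplit : A.card + B.card = C.card :=
        Finset.card_filter_add_card_filter_not _
      have hApermi : Permissible k 3 A := by
        constructor
        · intro p hp
          rw [hA, Finset.mem_filter] at hp
          have := mem_Grid.mp (hC.1 hp.1)
          rw [mem_Grid]
          omega
        · intro p hp hb
          have hpC : p ∈ C := Finset.mem_of_mem_filter _ hp
          exact hC.2 p hpC (Blocked_mono (Finset.filter_subset _ _) hb)
      have hAcard : A.card ≤ 3 * k - k / 2 := ih k (by omega) A hApermi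
      have hBsub : B ⊆ Finset.Icc (k + 1) (k + 2) ×ˢ Finset.Icc 1 3 := by
        intro p hp
        rw [hBdef, Finset.mem_filter] at hp
        have := mem_Grid.mp (hC.1 hp.1)
        rw [Finset.mem_product, Finset.mem_Icc, Finset.mem_Icc]
        omega
      have hScard : (Finset.Icc (k + 1) (k + 2) ×ˢ (Finset.Icc 1 3 : Finset ℕ)).card = 6 := by
        simp [Nat.card_Icc]
      have hBcard : B.card ≤ 5 := by
        by_contra h
        have h6 : B.card ≤ 6 := by
          calc B.card ≤ _ := Finset.card_le_card hBsub
          _ = 6 := hScard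
        have hBe : B = Finset.Icc (k + 1) (k + 2) ×ˢ Finset.Icc 1 3 :=
          Finset.eq_of_subset_of_card_le hBsub (by omega)
        have hmemS : ∀ q : ℕ × ℕ, q ∈ Finset.Icc (k + 1) (k + 2) ×ˢ (Finset.Icc 1 3 : Finset ℕ)
            → q ∈ C := by
          intro q hq
          rw [← hBe] at hq
          exact Finset.mem_of_mem_filter _ hq
        have h1 : (k + 1, 2) ∈ C := hmemS _ (by simp [Finset.mem_Icc])
        have h2 : (k + 1, 3) ∈ C := hmemS _ (by simp [Finset.mem_Icc])
        have h3 : (k + 1, 1) ∈ C := hmemS _ (by simp [Finset.mem_Icc])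
        have h4 : (k + 2, 2) ∈ C := hmemS _ (by simp [Finset.mem_Icc])
        exact hC.2 (k + 1, 2) h1 ⟨h2, h3, h4⟩
      omega

/-- For every m ≥ 2 there is a maximal configuration on the m×3 grid of
occupancy 2m + ⌈m/2⌉ (the brick pattern), and every maximal configuration on
the m×3 grid has occupancy at most 3m - ⌊m/2⌋; hence
2m + ⌈m/2⌉ ≤ E_{m,3} ≤ 3m - ⌊m/2⌋. (In ℕ, ⌈m/2⌉ = (m+1)/2.) -/
theorem Em3_bounds (m : ℕ) (hm : 2 ≤ m) :
    (∃ C : Finset (ℕ × ℕ), MaximalConfig m 3 C ∧ C.card = 2 * m + (m + 1) / 2) ∧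
    (∀ C : Finset (ℕ × ℕ), MaximalConfig m 3 C → C.card ≤ 3 * m - m / 2) := by
  refine ⟨⟨Brick m, Brick_maximal m hm, Brick_card m⟩, ?_⟩
  intro C hC
  exact upper_bound m C hC.1
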